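/- Let a, b be monic degree-n real Hurwitz polynomials and suppose c is a real polynomial of degree n such that c/a and c/b are strictly positive real. Then c is Hurwitz stable. -/

import Mathlib

open Polynomial

/-- A real polynomial is Hurwitz stable if all of its complex roots have
negative real part. -/
def Hurwitz (p : Polynomial ℝ) : Prop :=
  ∀ z : ℂ, (p.map (algebraMap ℝ ℂ)).IsRoot z → z.re < 0

/-- Evaluation of a real polynomial at the purely imaginary number `i ω`. -/
noncomputable def evalI (p : Polynomial ℝ) (ω : ℝ) : ℂ :=
  Polynomial.aeval ((ω : ℂ) * Complex.I) p

/-- `c / q` is strictly positive real. -/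
def SPR (c q : Polynomial ℝ) : Prop :=
  c.degree = q.degree ∧ Hurwitz q ∧ ∀ ω : ℝ, 0 < (evalI c ω / evalI q ω).re

/-!
Join `a` to `c` by `pₜ = (1 - t) a + t c`, `t ∈ [0, 1]`. Since `c(iω) / a(iω)` tends to
`lc c / lc a` and has positive real part, `lc c / lc a > 0`, so every `pₜ` has degree `deg a`
and a leading coefficient bounded away from `0`; and no `pₜ` vanishes on the imaginary axis,
as `Re (pₜ(iω) / a(iω)) = 1 - t + t Re (c(iω) / a(iω)) > 0`.

The set of `t` for which `pₜ` is Hurwitz is open, because a Hurwitz `q` bounds every polynomial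
of degree at most `deg q` on the closed right half-plane up to a constant factor. It is closed,
because a Hurwitz `q` satisfies `|q(z)| ≥ |lc q| (Re z)^(deg q)` there, whereas at a root `z` of
`pₜ` with `Re z > 0` the values `pₛ(z)` tend to `0` as `s → t`. By connectedness, `p₁ = c` is
Hurwitz.
-/

open Filter Topology Complex Bornology Asymptotics

section RootBounds

lemma norm_eval_eq_norm_leadingCoeff_mul_prod (Q : ℂ[X]) (z : ℂ) :
    ‖Q.eval z‖ = ‖Q.leadingCoeff‖ * (Q.roots.map (‖z - ·‖)).prod := by
  rw [(IsAlgClosed.splits Q).eval_eq_prod_roots, norm_mul]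
  exact congrArg _
    ((map_multiset_prod (normHom (α := ℂ)) _).trans (by rw [Multiset.map_map]; rfl))

variable {Q : ℂ[X]} {z : ℂ}

lemma norm_leadingCoeff_mul_re_pow_le_norm_eval (hQ : ∀ r ∈ Q.roots, r.re < 0)
    (hz : 0 ≤ z.re) : ‖Q.leadingCoeff‖ * z.re ^ Q.natDegree ≤ ‖Q.eval z‖ := by
  rw [norm_eval_eq_norm_leadingCoeff_mul_prod, ← IsAlgClosed.card_roots_eq_natDegree,
    ← Multiset.prod_replicate, ← Multiset.map_const']
  refine mul_le_mul_of_nonneg_left (Multiset.prod_map_le_prod_map₀ _ _ (fun _ _ ↦ hz)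
    fun r hr ↦ ?_) (norm_nonneg _)
  have := hQ r hr
  calc z.re ≤ (z - r).re := by simp; linarith
    _ ≤ ‖z - r‖ := re_le_norm _

lemma mul_one_add_norm_le_mul_norm_sub {r : ℂ} (hr : r.re < 0) (hz : 0 ≤ z.re) :
    -r.re * (1 + ‖z‖) ≤ (1 - r.re + ‖r‖) * ‖z - r‖ := by
  have h₁ : -r.re ≤ ‖z - r‖ :=
    calc -r.re ≤ (z - r).re := by simp; linarith
      _ ≤ ‖z - r‖ := re_le_norm _
  have h₂ : ‖z‖ ≤ ‖z - r‖ + ‖r‖ := norm_le_norm_sub_add z r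
  nlinarith [norm_nonneg r, norm_nonneg z]

lemma exists_pos_mul_one_add_norm_pow_le_norm_eval (hQ₀ : Q ≠ 0)
    (hQ : ∀ r ∈ Q.roots, r.re < 0) :
    ∃ ε > 0, ∀ z : ℂ, 0 ≤ z.re → ε * (1 + ‖z‖) ^ Q.natDegree ≤ ‖Q.eval z‖ := by
  have hκ : ∀ r ∈ Q.roots, 0 < -r.re / (1 - r.re + ‖r‖) := fun r hr ↦ by
    have := hQ r hr
    have := norm_nonneg r
    exact div_pos (by linarith) (by linarith)
  refine ⟨‖Q.leadingCoeff‖ * (Q.roots.map fun r ↦ -r.re / (1 - r.re + ‖r‖)).prod,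
    mul_pos (by simpa using hQ₀) (Multiset.prod_pos fun x hx ↦ ?_), fun z hz ↦ ?_⟩
  · obtain ⟨r, hr, rfl⟩ := Multiset.mem_map.mp hx
    exact hκ r hr
  rw [norm_eval_eq_norm_leadingCoeff_mul_prod, ← IsAlgClosed.card_roots_eq_natDegree,
    ← Multiset.prod_replicate, ← Multiset.map_const', mul_assoc, ← Multiset.prod_map_mul]
  refine mul_le_mul_of_nonneg_left (Multiset.prod_map_le_prod_map₀ _ _
    (fun r hr ↦ by have := hκ r hr; positivity) fun r hr ↦ ?_) (norm_nonneg _)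
  have := hQ r hr
  have := norm_nonneg r
  rw [div_mul_eq_mul_div, div_le_iff₀ (by linarith), mul_comm ‖z - r‖]
  exact mul_one_add_norm_le_mul_norm_sub (hQ r hr) hz

end RootBounds

lemma norm_eval_le_sum_mul_one_add_norm_pow {R : Type*} [NormedRing R] [NormOneClass R]
    (P : R[X]) {n : ℕ} (hP : P.natDegree ≤ n) (x : R) :
    ‖P.eval x‖ ≤ (∑ k ∈ Finset.range (n + 1), ‖P.coeff k‖) * (1 + ‖x‖) ^ n := by
  rw [eval_eq_sum_range' (Nat.lt_succ_of_le hP), Finset.sum_mul]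
  refine (norm_sum_le _ _).trans (Finset.sum_le_sum fun k hk ↦ ?_)
  have hx : ‖x‖ ≤ 1 + ‖x‖ := by linarith
  calc ‖P.coeff k * x ^ k‖ ≤ ‖P.coeff k‖ * ‖x‖ ^ k :=
        (norm_mul_le _ _).trans (mul_le_mul_of_nonneg_left (norm_pow_le _ _) (norm_nonneg _))
    _ ≤ ‖P.coeff k‖ * (1 + ‖x‖) ^ n := mul_le_mul_of_nonneg_left
        ((pow_le_pow_left₀ (norm_nonneg _) hx k).trans (pow_le_pow_right₀
          (by linarith [norm_nonneg x]) (Nat.lt_succ_iff.mp (Finset.mem_range.mp hk))))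
        (norm_nonneg _)

lemma tendsto_eval_div_eval_cobounded {𝕜 : Type*} [NormedField 𝕜] {P Q : 𝕜[X]}
    (h : P.natDegree = Q.natDegree) :
    Tendsto (fun x ↦ P.eval x / Q.eval x) (cobounded 𝕜)
      (𝓝 (P.leadingCoeff / Q.leadingCoeff)) := by
  refine (isEquivalent_cobounded_leading_monomial.div
    isEquivalent_cobounded_leading_monomial).symm.tendsto_nhds (tendsto_const_nhds.congr' ?_)
  filter_upwards [eventually_ne_cobounded 0] with x hx
  simp only [Pi.div_apply, h, mul_div_mul_right _ _ (pow_ne_zero _ hx)]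

lemma tendsto_ofReal_mul_I_cobounded :
    Tendsto (fun ω : ℝ ↦ (ω : ℂ) * I) atTop (cobounded ℂ) := by
  rw [← tendsto_norm_atTop_iff_cobounded]
  simpa using tendsto_abs_atTop_atTop

lemma min_le_one_sub_add_mul {t r : ℝ} (ht₀ : 0 ≤ t) (ht₁ : t ≤ 1) :
    min 1 r ≤ 1 - t + t * r := by
  rcases le_total 1 r with h | h
  · rw [min_eq_left h]; nlinarith
  · rw [min_eq_right h]; nlinarith

section Hurwitz

variable {p q d : ℝ[X]} {z : ℂ}

lemma hurwitz_iff_aeval : Hurwitz p ↔ ∀ z : ℂ, aeval z p = 0 → z.re < 0 := by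
  simp only [Hurwitz, IsRoot.def, eval_map_algebraMap]

lemma Hurwitz.ne_zero (hp : Hurwitz p) : p ≠ 0 := by
  rintro rfl
  simpa using hp 0 (by simp)

lemma Hurwitz.aeval_ne_zero (hp : Hurwitz p) (hz : 0 ≤ z.re) : aeval z p ≠ 0 :=
  fun h ↦ (hz.trans_lt (hurwitz_iff_aeval.mp hp z h)).false

lemma Hurwitz.abs_leadingCoeff_mul_re_pow_le (hp : Hurwitz p) (hz : 0 ≤ z.re) :
    |p.leadingCoeff| * z.re ^ p.natDegree ≤ ‖aeval z p‖ := by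
  have h := norm_leadingCoeff_mul_re_pow_le_norm_eval
    (fun r hr ↦ hp r (isRoot_of_mem_roots hr)) hz
  simpa [leadingCoeff_map, natDegree_map, eval_map_algebraMap] using h

lemma Hurwitz.exists_norm_aeval_le_mul (hq : Hurwitz q) (hd : d.natDegree ≤ q.natDegree) :
    ∃ K > 0, ∀ z : ℂ, 0 ≤ z.re → ‖aeval z d‖ ≤ K * ‖aeval z q‖ := by
  have hQ₀ : q.map (algebraMap ℝ ℂ) ≠ 0 :=
    (Polynomial.map_ne_zero_iff (algebraMap ℝ ℂ).injective).mpr hq.ne_zero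
  obtain ⟨ε, hε, hlow⟩ := exists_pos_mul_one_add_norm_pow_le_norm_eval hQ₀
    fun r hr ↦ hq r (isRoot_of_mem_roots hr)
  set M := ∑ k ∈ Finset.range (q.natDegree + 1), ‖(d.map (algebraMap ℝ ℂ)).coeff k‖
  have hM : 0 ≤ M := by positivity
  refine ⟨(M + 1) / ε, by positivity, fun z hz ↦ ?_⟩
  have hup := norm_eval_le_sum_mul_one_add_norm_pow (d.map (algebraMap ℝ ℂ))
    (n := q.natDegree) (by rwa [natDegree_map]) z
  have hlo := hlow z hz
  rw [natDegree_map] at hlo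
  rw [eval_map_algebraMap] at hup hlo
  calc ‖aeval z d‖ ≤ M * (1 + ‖z‖) ^ q.natDegree := hup
    _ ≤ (M + 1) * (1 + ‖z‖) ^ q.natDegree := by gcongr; linarith
    _ = (M + 1) / ε * (ε * (1 + ‖z‖) ^ q.natDegree) := by field_simp
    _ ≤ (M + 1) / ε * ‖aeval z q‖ := by gcongr

lemma Hurwitz.exists_hurwitz_add_C_mul (hq : Hurwitz q) (hd : d.natDegree ≤ q.natDegree) :
    ∃ δ > 0, ∀ s : ℝ, |s| < δ → Hurwitz (q + C s * d) := by
  obtain ⟨K, hK, hbound⟩ := hq.exists_norm_aeval_le_mul hd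
  refine ⟨K⁻¹, by positivity, fun s hs ↦ hurwitz_iff_aeval.mpr fun z hz ↦ ?_⟩
  by_contra! hre
  have hq₀ : 0 < ‖aeval z q‖ := norm_pos_iff.mpr (hq.aeval_ne_zero hre)
  have heq : aeval z q = -(s * aeval z d) := by
    simpa [eq_neg_iff_add_eq_zero] using hz
  have : ‖aeval z q‖ < ‖aeval z q‖ :=
    calc ‖aeval z q‖ = |s| * ‖aeval z d‖ := by simp [heq]
      _ ≤ |s| * (K * ‖aeval z q‖) := by gcongr; exact hbound z hre
      _ < K⁻¹ * (K * ‖aeval z q‖) := by gcongr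
      _ = ‖aeval z q‖ := by field_simp
  exact this.false

end Hurwitz

section Segment

variable (a c : ℝ[X])

noncomputable def segmentPoly (t : unitInterval) : ℝ[X] := C (1 - (t : ℝ)) * a + C (t : ℝ) * c

@[simp] lemma segmentPoly_zero : segmentPoly a c 0 = a := by simp [segmentPoly]

@[simp] lemma segmentPoly_one : segmentPoly a c 1 = c := by simp [segmentPoly]

lemma segmentPoly_eq_add (s t : unitInterval) :
    segmentPoly a c t = segmentPoly a c s + C ((t : ℝ) - s) * (c - a) := by
  simp only [segmentPoly, C_sub, C_1]
  ring

lemma aeval_segmentPoly (z : ℂ) (t : unitInterval) :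
    aeval z (segmentPoly a c t) = (1 - (t : ℂ)) * aeval z a + t * aeval z c := by
  simp [segmentPoly]

variable {a c}

theorem Hurwitz.of_segmentPoly (ha : Hurwitz a) {n : ℕ} {m : ℝ} (hm : 0 < m)
    (hdeg : ∀ t, (segmentPoly a c t).natDegree = n)
    (hlc : ∀ t, m ≤ |(segmentPoly a c t).leadingCoeff|)
    (haxis : ∀ t (ω : ℝ), aeval ((ω : ℂ) * I) (segmentPoly a c t) ≠ 0) :
    Hurwitz c := by
  have hdiff : (c - a).natDegree ≤ n := by
    simpa [hdeg] using natDegree_sub_le_of_le (hdeg 1).le (hdeg 0).le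
  let S : Set unitInterval := {t | Hurwitz (segmentPoly a c t)}
  have hopen : IsOpen S := by
    refine Metric.isOpen_iff.mpr fun s hs ↦ ?_
    obtain ⟨δ, hδ, hpert⟩ := Hurwitz.exists_hurwitz_add_C_mul hs (hdiff.trans (hdeg s).ge)
    refine ⟨δ, hδ, fun t ht ↦ ?_⟩
    rw [Metric.mem_ball, Subtype.dist_eq, Real.dist_eq] at ht
    show Hurwitz _
    rw [segmentPoly_eq_add a c s t]
    exact hpert _ ht
  have hclosed : IsClosed S := by
    refine isOpen_compl_iff.mp (Metric.isOpen_iff.mpr fun s hs ↦ ?_)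
    obtain ⟨z, hz, hre⟩ : ∃ z : ℂ, aeval z (segmentPoly a c s) = 0 ∧ 0 < z.re := by
      obtain ⟨z, hz, hre⟩ : ∃ z : ℂ, aeval z (segmentPoly a c s) = 0 ∧ 0 ≤ z.re := by
        simpa [S, hurwitz_iff_aeval] using hs
      refine ⟨z, hz, hre.lt_of_ne fun h ↦ haxis s z.im ?_⟩
      rwa [show z = z.im * I by apply Complex.ext <;> simp [← h]] at hz
    set K := ‖aeval z (c - a)‖
    refine ⟨m * z.re ^ n / (K + 1), by positivity, fun t ht ht' ↦ ?_⟩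
    rw [Metric.mem_ball, Subtype.dist_eq, Real.dist_eq] at ht
    have hval : ‖aeval z (segmentPoly a c t)‖ = |(t : ℝ) - s| * K := by
      rw [segmentPoly_eq_add a c s t, map_add, hz, zero_add, map_mul, aeval_C, norm_mul,
        Complex.coe_algebraMap, Complex.norm_real, Real.norm_eq_abs]
    have := (ht'.abs_leadingCoeff_mul_re_pow_le hre.le).trans_eq hval
    rw [hdeg] at this
    have hlt : |(t : ℝ) - s| * (K + 1) < m * z.re ^ n := (lt_div_iff₀ (by positivity)).mp ht
    nlinarith [hlc t, abs_nonneg ((t : ℝ) - s), pow_pos hre n, norm_nonneg (aeval z (c - a))]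
  have hS : S = Set.univ := IsClopen.eq_univ ⟨hclosed, hopen⟩ ⟨0, by simpa [S] using ha⟩
  simpa [S] using (hS ▸ Set.mem_univ 1 : (1 : unitInterval) ∈ S)

end Segment

lemma tendsto_evalI_div_evalI {c q : ℝ[X]} (h : c.natDegree = q.natDegree) :
    Tendsto (fun ω ↦ evalI c ω / evalI q ω) atTop
      (𝓝 ((c.leadingCoeff / q.leadingCoeff : ℝ) : ℂ)) := by
  have := (tendsto_eval_div_eval_cobounded (P := c.map (algebraMap ℝ ℂ))
    (Q := q.map (algebraMap ℝ ℂ)) (by simpa using h)).comp tendsto_ofReal_mul_I_cobounded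
  simpa [evalI, Function.comp_def, eval_map_algebraMap, leadingCoeff_map] using this

namespace SPR

variable {c q : ℝ[X]}

lemma natDegree_eq (h : SPR c q) : c.natDegree = q.natDegree :=
  natDegree_eq_of_degree_eq h.1

lemma leadingCoeff_div_pos (h : SPR c q) : 0 < c.leadingCoeff / q.leadingCoeff := by
  have hlim := (Complex.continuous_re.tendsto _).comp (tendsto_evalI_div_evalI h.natDegree_eq)
  obtain ⟨-, hq, hpos⟩ := h
  have hc₀ : c ≠ 0 := by
    rintro rfl
    simpa [evalI] using hpos 0
  have hnonneg : 0 ≤ c.leadingCoeff / q.leadingCoeff := by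
    simpa using ge_of_tendsto hlim (Eventually.of_forall fun ω ↦ (hpos ω).le)
  exact hnonneg.lt_of_ne
    (div_ne_zero (leadingCoeff_ne_zero.mpr hc₀) (leadingCoeff_ne_zero.mpr hq.ne_zero)).symm

lemma aeval_segmentPoly_ne_zero (h : SPR c q) (t : unitInterval) (ω : ℝ) :
    aeval ((ω : ℂ) * I) (segmentPoly q c t) ≠ 0 := by
  obtain ⟨-, hq, hpos⟩ := h
  have hq₀ : evalI q ω ≠ 0 := hq.aeval_ne_zero (by simp)
  have hre : 0 < (evalI (segmentPoly q c t) ω / evalI q ω).re := by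
    have hdiv : evalI (segmentPoly q c t) ω / evalI q ω =
        (1 - (t : ℂ)) + t * (evalI c ω / evalI q ω) := by
      rw [evalI, aeval_segmentPoly]
      field_simp
      rfl
    simp only [hdiv, add_re, sub_re, one_re, ofReal_re, re_ofReal_mul]
    exact (lt_min one_pos (hpos ω)).trans_le (min_le_one_sub_add_mul t.2.1 t.2.2)
  intro h₀
  simp [evalI, h₀] at hre

lemma abs_mul_min_pos (h : SPR c q) :
    0 < |q.leadingCoeff| * min 1 (c.leadingCoeff / q.leadingCoeff) := by
  have := h.leadingCoeff_div_pos
  have := leadingCoeff_ne_zero.mpr h.2.1.ne_zero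
  positivity

lemma abs_coeff_segmentPoly_ge (h : SPR c q) (t : unitInterval) :
    |q.leadingCoeff| * min 1 (c.leadingCoeff / q.leadingCoeff) ≤
      |(segmentPoly q c t).coeff q.natDegree| := by
  have hρ := h.leadingCoeff_div_pos
  have hq₀ := leadingCoeff_ne_zero.mpr h.2.1.ne_zero
  set ρ := c.leadingCoeff / q.leadingCoeff
  have hcoeff : (segmentPoly q c t).coeff q.natDegree = q.leadingCoeff * (1 - t + t * ρ) := by
    have hc : c.coeff q.natDegree = c.leadingCoeff := by
      rw [← h.natDegree_eq, coeff_natDegree]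
    simp only [segmentPoly, coeff_add, coeff_C_mul, hc, coeff_natDegree, ρ]
    field_simp
  have hmin := min_le_one_sub_add_mul (r := ρ) t.2.1 t.2.2
  rw [hcoeff, abs_mul, abs_of_pos ((lt_min one_pos hρ).trans_le hmin)]
  gcongr

lemma natDegree_segmentPoly (h : SPR c q) (t : unitInterval) :
    (segmentPoly q c t).natDegree = q.natDegree := by
  refine le_antisymm ?_ (le_natDegree_of_ne_zero fun h₀ ↦ ?_)
  · refine (natDegree_add_le _ _).trans (max_le ?_ ?_) <;>
      refine (natDegree_C_mul_le _ _).trans ?_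
    · rfl
    · exact h.natDegree_eq.le
  · exact abs_pos.mp (h.abs_mul_min_pos.trans_le (h.abs_coeff_segmentPoly_ge t)) h₀

theorem hurwitz (h : SPR c q) : Hurwitz c :=
  h.2.1.of_segmentPoly h.abs_mul_min_pos h.natDegree_segmentPoly
    (fun t ↦ (h.abs_coeff_segmentPoly_ge t).trans_eq
      (by rw [leadingCoeff, h.natDegree_segmentPoly t]))
    h.aeval_segmentPoly_ne_zero

end SPR

theorem stmt_19_general (a c : Polynomial ℝ)
    (hca : SPR c a) :
    Hurwitz c :=
  hca.hurwitz

theorem stmt_19 (n : ℕ) (a b c : Polynomial ℝ)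
    (haM : a.Monic) (hbM : b.Monic)
    (hna : a.natDegree = n) (hnb : b.natDegree = n)
    (haH : Hurwitz a) (hbH : Hurwitz b)
    (hcd : c.natDegree = n)
    (hca : SPR c a) (hcb : SPR c b) :
    Hurwitz c :=
  stmt_19_general a c hca
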